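/- arXiv:2411.00721 — 3 statements merged into one kernel-verified Lean document; each statement's English description precedes it below -/
import Mathlib

section
/- Let f : F_2^k → F_2 be a Boolean function of diameter k, and suppose there exists j with 1 ≤ j ≤ k such that the function g(x_1, …, x_k) := f(x_1, …, x_k) ⊕ x_j does not depend on x_j, and such that for each integer t with 1−j ≤ t ≤ k−j for which g depends on x_{j+t}, the product g(x_1, …, x_k) · g(x_{1+t}, …, x_{k+t}) is identically 0. Then for every n ≥ k the map F : F_2^n → F_2^n defined by F(x)_i = f(x_{i−j+1}, …, x_{i−j+k}) (indices modulo n) satisfies F(F(x)) = x for all x ∈ F_2^n; i.e., F is an involution. -/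
/-- The shift-invariant map `F : F_2^n → F_2^n` induced by a local rule
`f : F_2^k → F_2`, namely `F(x)_i = f(x_i, x_{i+1}, …, x_{i+k-1})`
with indices taken modulo `n`. -/
def induced (k n : ℕ) (f : (Fin k → ZMod 2) → ZMod 2) :
    (ZMod n → ZMod 2) → ZMod n → ZMod 2 :=
  fun x i => f fun j => x (i + ((j : ℕ) : ZMod n))

/-- The shift-invariant map induced by `f : F_2^k → F_2` with anchor shifted by `j0`
(0-based), namely `F(x)_i = f(x_{i-j0}, x_{i-j0+1}, …, x_{i-j0+k-1})`, indices mod `n`.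
For a 1-based special index `j` this is `F(x)_i = f(x_{i-j+1}, …, x_{i-j+k})`
with `j0 = j - 1`. -/
def inducedShift (k n : ℕ) (j0 : ℕ) (f : (Fin k → ZMod 2) → ZMod 2) :
    (ZMod n → ZMod 2) → ZMod n → ZMod 2 :=
  fun x i => f fun m => x (i - (j0 : ZMod n) + ((m : ℕ) : ZMod n))

/-- A Boolean function `g` depends on the coordinate `i` if there are two inputs
differing only in coordinate `i` on which `g` takes different values. -/
def BoolDependsOn {k : ℕ} (g : (Fin k → ZMod 2) → ZMod 2) (i : Fin k) : Prop :=
  ∃ x y : Fin k → ZMod 2, (∀ j, j ≠ i → x j = y j) ∧ g x ≠ g y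

/-- The cyclic right shift on `F_2^n`. -/
def shiftR (n : ℕ) : (ZMod n → ZMod 2) → ZMod n → ZMod 2 :=
  fun x i => x (i - 1)


/-!
Write `F(y)_p = y_p + g(w_p(y))`, where `w_p(y)` is the window read at `p` and
`g(w) = f(w) + w_j`, so `F` flips exactly the active positions, those `q` with `g(w_q(y)) = 1`.
By the product condition no active position lies in the window of another one at a coordinate
on which `g` depends. Hence `F` keeps active positions active, and it creates no new ones: a new
one at `p` would see, at a coordinate on which `g` depends, a flipped and hence still active
position. So `F` preserves `g` on every window, and `F(F(y))_p = y_p + 2 g(w_p(y)) = y_p`.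
-/

lemma ZMod.two_eq_one_of_ne_zero {b : ZMod 2} (h : b ≠ 0) : b = 1 :=
  Fin.eq_one_of_ne_zero b h

section Dependence

variable {k : ℕ} {g : (Fin k → ZMod 2) → ZMod 2} {i : Fin k}

lemma apply_update_eq_of_not_boolDependsOn (h : ¬ BoolDependsOn g i) (x : Fin k → ZMod 2)
    (v : ZMod 2) : g (Function.update x i v) = g x := by
  by_contra hne
  exact h ⟨_, _, fun m hm => Function.update_of_ne hm v x, hne⟩

lemma apply_piecewise_eq_of_not_boolDependsOn (x y : Fin k → ZMod 2) (s : Finset (Fin k))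
    (hs : ∀ m ∈ s, ¬ BoolDependsOn g m) : g (s.piecewise y x) = g x := by
  classical
  induction s using Finset.induction_on with
  | empty => simp
  | insert a s _ ih =>
    rw [Finset.piecewise_insert, apply_update_eq_of_not_boolDependsOn (hs a (s.mem_insert_self a)),
      ih fun m hm => hs m (Finset.mem_insert_of_mem hm)]

lemma apply_eq_of_not_boolDependsOn (x y : Fin k → ZMod 2)
    (h : ∀ m, x m ≠ y m → ¬ BoolDependsOn g m) : g x = g y := by
  classical
  have hy : (Finset.univ.filter fun m => x m ≠ y m).piecewise y x = y := by
    ext m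
    by_cases hm : x m = y m <;> simp [Finset.piecewise, hm]
  rw [← hy, apply_piecewise_eq_of_not_boolDependsOn x y _ fun m hm => h m (by simpa using hm)]

end Dependence

section CellularAutomaton

variable {G : Type*} [AddCommGroupWithOne G] {k : ℕ} (f : (Fin k → ZMod 2) → ZMod 2) (j : Fin k)

def window (y : G → ZMod 2) (p : G) : Fin k → ZMod 2 :=
  fun m => y (p - (j : ℕ) + (m : ℕ))

def ruleMap (y : G → ZMod 2) : G → ZMod 2 :=
  fun p => f (window j y p)

def toggle (w : Fin k → ZMod 2) : ZMod 2 :=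
  f w + w j

variable {f j}

@[simp]
lemma window_self (y : G → ZMod 2) (p : G) : window j y p j = y p := by
  simp [window]

lemma ruleMap_apply (y : G → ZMod 2) (p : G) :
    ruleMap f j y p = y p + toggle f j (window j y p) := by
  rw [toggle, window_self, ← add_assoc, add_comm (y p), add_assoc, CharTwo.add_self_eq_zero,
    add_zero, ruleMap]

lemma window_ruleMap (y : G → ZMod 2) (p : G) (m : Fin k) :
    window j (ruleMap f j y) p m =
      window j y p m + toggle f j (window j y (p - (j : ℕ) + (m : ℕ))) :=
  ruleMap_apply y _

lemma toggle_window_eq_one_of_ne {y : G → ZMod 2} {p : G} {m : Fin k}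
    (hm : window j (ruleMap f j y) p m ≠ window j y p m) :
    toggle f j (window j y (p - (j : ℕ) + (m : ℕ))) = 1 := by
  rw [window_ruleMap] at hm
  exact ZMod.two_eq_one_of_ne_zero fun h => hm (by rw [h, add_zero])

variable (G f j) in
def ToggleProductVanishes : Prop :=
  ∀ c : Fin k, BoolDependsOn (toggle f j) c → ∀ (y : G → ZMod 2) (p : G),
    toggle f j (window j y p) * toggle f j (window j y (p - (j : ℕ) + (c : ℕ))) = 0

variable (hprod : ToggleProductVanishes G f j)
include hprod

lemma ToggleProductVanishes.not_boolDependsOn {y : G → ZMod 2} {p : G} {m : Fin k}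
    (hp : toggle f j (window j y p) = 1)
    (hm : toggle f j (window j y (p - (j : ℕ) + (m : ℕ))) = 1) :
    ¬ BoolDependsOn (toggle f j) m := fun hdep => by
  simpa [hp, hm] using hprod m hdep y p

lemma ToggleProductVanishes.toggle_window_ruleMap_of_eq_one {y : G → ZMod 2} {p : G}
    (hp : toggle f j (window j y p) = 1) : toggle f j (window j (ruleMap f j y) p) = 1 := by
  rw [apply_eq_of_not_boolDependsOn (g := toggle f j) _ (window j y p), hp]
  intro m hm
  exact hprod.not_boolDependsOn hp (toggle_window_eq_one_of_ne hm)

lemma ToggleProductVanishes.toggle_window_ruleMap (y : G → ZMod 2) (p : G) :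
    toggle f j (window j (ruleMap f j y) p) = toggle f j (window j y p) := by
  by_cases hp : toggle f j (window j y p) = 1
  · rw [hp, hprod.toggle_window_ruleMap_of_eq_one hp]
  by_contra hne
  obtain ⟨m, hm, hdep⟩ : ∃ m, window j (ruleMap f j y) p m ≠ window j y p m ∧
      BoolDependsOn (toggle f j) m := by
    by_contra! h
    exact hne (apply_eq_of_not_boolDependsOn _ _ h)
  have hq := toggle_window_eq_one_of_ne hm
  have h0 : toggle f j (window j y p) = 0 := by
    by_contra h
    exact hp (ZMod.two_eq_one_of_ne_zero h)
  have hFp : toggle f j (window j (ruleMap f j y) p) = 1 :=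
    ZMod.two_eq_one_of_ne_zero (h0 ▸ hne)
  exact hprod.not_boolDependsOn hFp (hprod.toggle_window_ruleMap_of_eq_one hq) hdep

theorem ToggleProductVanishes.ruleMap_involutive : Function.Involutive (ruleMap (G := G) f j) := by
  intro y
  funext p
  rw [ruleMap_apply, hprod.toggle_window_ruleMap, ruleMap_apply, add_assoc,
    CharTwo.add_self_eq_zero, add_zero]

end CellularAutomaton

lemma toggleProductVanishes_of_int {k : ℕ} {f : (Fin k → ZMod 2) → ZMod 2} {j : Fin k}
    (hprod : ∀ c : Fin k, BoolDependsOn (fun x => f x + x j) c →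
      ∀ x : ℤ → ZMod 2,
        (f (fun m => x ((m : ℕ) : ℤ)) + x ((j : ℕ) : ℤ)) *
          (f (fun m => x (((m : ℕ) : ℤ) + (((c : ℕ) : ℤ) - ((j : ℕ) : ℤ)))) +
            x (((j : ℕ) : ℤ) + (((c : ℕ) : ℤ) - ((j : ℕ) : ℤ)))) = 0)
    (G : Type*) [AddCommGroupWithOne G] : ToggleProductVanishes G f j := by
  intro c hc y p
  have key := hprod c hc fun q => y (p - (j : ℕ) + q)
  push_cast at key
  have hshift : window j y (p - (j : ℕ) + (c : ℕ)) =
      fun m : Fin k => y (p - (j : ℕ) + ((m : ℕ) + ((c : ℕ) - (j : ℕ)))) := by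
    funext m
    simp only [window]
    abel_nf
  rw [toggle, toggle, hshift]
  exact key

lemma inducedShift_eq_ruleMap (k n : ℕ) (f : (Fin k → ZMod 2) → ZMod 2) (j : Fin k) :
    inducedShift k n (j : ℕ) f = ruleMap f j :=
  rfl

/-- under the hypotheses of Statement 1, for every `n ≥ k` the map
`F(x)_i = f(x_{i-j+1}, …, x_{i-j+k})` (1-based `j`; here `j : Fin k` is 0-based, so the
anchor shift is `j`) is an involution: `F(F(x)) = x` for all `x ∈ F_2^n`. -/
theorem stmt2 (k : ℕ) (f : (Fin k → ZMod 2) → ZMod 2)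
    (j : Fin k)
    (hprod : ∀ c : Fin k, BoolDependsOn (fun x => f x + x j) c →
      ∀ x : ℤ → ZMod 2,
        (f (fun m => x ((m : ℕ) : ℤ)) + x ((j : ℕ) : ℤ)) *
          (f (fun m => x (((m : ℕ) : ℤ) + (((c : ℕ) : ℤ) - ((j : ℕ) : ℤ)))) +
            x (((j : ℕ) : ℤ) + (((c : ℕ) : ℤ) - ((j : ℕ) : ℤ)))) = 0) :
    ∀ n, k ≤ n → ∀ x : ZMod n → ZMod 2,
      inducedShift k n (j : ℕ) f (inducedShift k n (j : ℕ) f x) = x :=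
  fun n _ => by
    rw [inducedShift_eq_ruleMap]
    exact (toggleProductVanishes_of_int hprod (ZMod n)).ruleMap_involutive
end

section
/- Let ε_{1−s} … ε_{−1} ★ ε_1 … ε_{k−s} be a primitive landscape with associated Boolean function f(x) = x_s ⊕ ∏_{i : ε_i ∈ {0,1}} (x_{s+i} ⊕ ε_i ⊕ 1) on F_2^k, and suppose that for each index d_1 with ε_{d_1} ∈ {0, 1} there exists d_2 such that ε_{d_2} and ε_{d_1+d_2} are defined and {ε_{d_2}, ε_{d_1+d_2}} = {0, 1}. Then for every n ≥ k the map F : F_2^n → F_2^n defined by F(x)_i = f(x_{i−s+1}, …, x_{i−s+k}) (indices modulo n) is an involution: F(F(x)) = x for all x ∈ F_2^n. -/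
/-!
`F` flips the cell `i` exactly when the fixed cells of the landscape occur in `x` with the star
at `i`. The hypothesis says that two occurrences are never offset by a fixed position `d₁`: the
cell at offset `d₁ + d₂` of the first is the cell at offset `d₂` of the second and would carry
both bits. So no flipped cell is a fixed cell of an occurrence, and occurrences survive the flip.
Conversely, a new occurrence would need a flipped cell at some fixed offset `d₁`, i.e. an old
occurrence there, whose unflipped cell at offset `d₂` contradicts the new occurrence at offset
`d₁ + d₂`. Hence `F x` has the same occurrences as `x`, and `F (F x) = x`.
-/

section PatternFlip

variable {ι A : Type*} [AddCommSemigroup A] (o : ι → A) (ε : ι → Option (ZMod 2))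

def MatchesAt (x : A → ZMod 2) (i : A) : Prop :=
  ∀ p b, ε p = some b → x (i + o p) = b

def OverlapFree : Prop :=
  ∀ p₁, (ε p₁).isSome → ∃ p₂ p₃, o p₃ = o p₂ + o p₁ ∧
    ∃ b₂ b₃ : ZMod 2, ε p₂ = some b₂ ∧ ε p₃ = some b₃ ∧ b₂ ≠ b₃

open Classical in
noncomputable def flipMatches (x : A → ZMod 2) : A → ZMod 2 :=
  fun i => x i + if MatchesAt o ε x i then 1 else 0

variable {o ε}

theorem OverlapFree.not_matchesAt_add (h : OverlapFree o ε) {x : A → ZMod 2} {i : A}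
    (hi : MatchesAt o ε x i) {p : ι} {b : ZMod 2} (hp : ε p = some b) :
    ¬ MatchesAt o ε x (i + o p) := by
  intro hip
  obtain ⟨p₂, p₃, ho, b₂, b₃, h₂, h₃, hne⟩ := h p (by simp [hp])
  refine hne ((hip p₂ b₂ h₂).symm.trans ?_)
  rw [← hi p₃ b₃ h₃, ho, add_comm (o p₂), add_assoc]

theorem flipMatches_of_not_matchesAt {x : A → ZMod 2} {i : A} (hi : ¬ MatchesAt o ε x i) :
    flipMatches o ε x i = x i := by
  simp [flipMatches, hi]

theorem OverlapFree.matchesAt_flipMatches_iff (h : OverlapFree o ε) (x : A → ZMod 2) (i : A) :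
    MatchesAt o ε (flipMatches o ε x) i ↔ MatchesAt o ε x i := by
  refine ⟨fun hflip => ?_, fun hi p b hp => ?_⟩
  · by_contra hi
    obtain ⟨p₁, b₁, h₁, hne₁⟩ : ∃ p₁ b₁, ε p₁ = some b₁ ∧ x (i + o p₁) ≠ b₁ := by
      simpa [MatchesAt] using hi
    have hj : MatchesAt o ε x (i + o p₁) := by
      by_contra hj
      exact hne₁ (flipMatches_of_not_matchesAt hj ▸ hflip p₁ b₁ h₁)
    obtain ⟨p₂, p₃, ho, b₂, b₃, h₂, h₃, hne⟩ := h p₁ (by simp [h₁])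
    have hcell : i + o p₃ = i + o p₁ + o p₂ := by rw [ho, add_comm (o p₂), add_assoc]
    apply hne
    rw [← hj p₂ b₂ h₂, ← hflip p₃ b₃ h₃, hcell,
      flipMatches_of_not_matchesAt (h.not_matchesAt_add hj h₂)]
  · rw [flipMatches_of_not_matchesAt (h.not_matchesAt_add hi hp), hi p b hp]

theorem OverlapFree.flipMatches_flipMatches (h : OverlapFree o ε) (x : A → ZMod 2) :
    flipMatches o ε (flipMatches o ε x) = x := by
  funext i
  rw [flipMatches, flipMatches, h.matchesAt_flipMatches_iff, add_assoc, CharTwo.add_self_eq_zero,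
    add_zero]

end PatternFlip

open Classical in
theorem prod_elim_eq_ite {ι : Type*} [Fintype ι] (ε : ι → Option (ZMod 2)) (y : ι → ZMod 2) :
    ∏ p, (ε p).elim 1 (fun b => y p + b + 1) = if ∀ p b, ε p = some b → y p = b then 1 else 0 := by
  have hbit : ∀ a b : ZMod 2, a + b + 1 = if a = b then 1 else 0 := by decide
  rw [← Fintype.prod_boole]
  refine Finset.prod_congr rfl fun p _ => ?_
  cases ε p <;> simp [hbit]

/-- with the same primitive-landscape setup and hypothesis as
Statement 3, for every `n ≥ k` the map
`F(x)_i = f(x_{i-s+1}, …, x_{i-s+k})` (1-based star index `s`; here `s0 = s - 1` so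
the anchor shift is `s0`) is an involution: `F(F(x)) = x` for all `x ∈ F_2^n`. -/
theorem stmt4 (k : ℕ) (s0 : Fin k)
    (ε : Fin k → Option (ZMod 2))
    (hcond : ∀ p1 : Fin k, (ε p1).isSome →
      ∃ p2 p3 : Fin k, ((p3 : ℕ) : ℤ) = ((p2 : ℕ) : ℤ) + ((p1 : ℕ) : ℤ) - ((s0 : ℕ) : ℤ) ∧
        ∃ b2 b3 : ZMod 2, ε p2 = some b2 ∧ ε p3 = some b3 ∧ b2 ≠ b3) :
    ∀ n, k ≤ n → ∀ x : ZMod n → ZMod 2,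
      inducedShift k n (s0 : ℕ)
          (fun x => x s0 + ∏ p : Fin k, (ε p).elim 1 (fun b => x p + b + 1))
        (inducedShift k n (s0 : ℕ)
          (fun x => x s0 + ∏ p : Fin k, (ε p).elim 1 (fun b => x p + b + 1)) x) = x := by
  intro n _ x
  have hfree : OverlapFree (fun p : Fin k => ((p : ℕ) : ZMod n) - ((s0 : ℕ) : ZMod n)) ε := by
    intro p₁ h₁
    obtain ⟨p₂, p₃, ho, hbits⟩ := hcond p₁ h₁
    refine ⟨p₂, p₃, ?_, hbits⟩
    have := congrArg (Int.cast : ℤ → ZMod n) ho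
    push_cast at this
    simp only [this]
    ring
  have hF : inducedShift k n (s0 : ℕ)
      (fun x => x s0 + ∏ p : Fin k, (ε p).elim 1 (fun b => x p + b + 1))
      = flipMatches (fun p : Fin k => ((p : ℕ) : ZMod n) - ((s0 : ℕ) : ZMod n)) ε := by
    funext x i
    simp only [inducedShift, flipMatches, MatchesAt, sub_add_cancel, prod_elim_eq_ite,
      sub_add_eq_add_sub, add_sub_assoc]
    congr
  rw [hF, hfree.flipMatches_flipMatches]
end

section
/- If f : F_2^k → F_2 is a (k, n)-lifting for all sufficiently large n (i.e., there exists N such that f is a (k, n)-lifting for all n ≥ N), then f is a (k, n)-lifting for all n ≥ k. -/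
/-- A Boolean function `g` depends on the coordinate `i` if there are two inputs
differing only in coordinate `i` on which `g` takes different values. -/
def DependsOnCoord {k : ℕ} (g : (Fin k → ZMod 2) → ZMod 2) (i : Fin k) : Prop :=
  ∃ x y : Fin k → ZMod 2, (∀ j, j ≠ i → x j = y j) ∧ g x ≠ g y

/-! Reduction `ZMod m → ZMod n` for `n ∣ m` is surjective and intertwines the induced maps,
so a configuration on `ZMod n` lifts periodically to `ZMod m` and injectivity descends from
`m` to `n`. Taking `m` a multiple of `n` beyond `N`, and using finiteness, gives bijectivity. -/

theorem induced_comp_castHom {k m n : ℕ} (f : (Fin k → ZMod 2) → ZMod 2) (h : n ∣ m)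
    (x : ZMod n → ZMod 2) :
    induced k m f (x ∘ ZMod.castHom h (ZMod n)) = induced k n f x ∘ ZMod.castHom h (ZMod n) := by
  funext i
  simp only [induced, Function.comp_apply, map_add, map_natCast]

theorem injective_induced_of_dvd {k m n : ℕ} {f : (Fin k → ZMod 2) → ZMod 2} (h : n ∣ m)
    (hm : Function.Injective (induced k m f)) : Function.Injective (induced k n f) := by
  intro x y hxy
  apply (ZMod.castHom_surjective h).injective_comp_right
  apply hm
  simp only [induced_comp_castHom, hxy]

theorem not_injective_induced_zero (n : ℕ) (f : (Fin 0 → ZMod 2) → ZMod 2) :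
    ¬ Function.Injective (induced 0 n f) := by
  intro hinj
  have hconst : induced 0 n f 0 = induced 0 n f 1 := by
    funext i
    exact congrArg f (Subsingleton.elim _ _)
  exact zero_ne_one (hinj hconst)

/-- if `f : F_2^k → F_2` is a `(k,n)`-lifting for all sufficiently
large `n`, then `f` is a `(k,n)`-lifting for all `n ≥ k`. -/
theorem stmt8 (k : ℕ) (f : (Fin k → ZMod 2) → ZMod 2)
    (hf : ∃ N, ∀ n, N ≤ n → Function.Bijective (induced k n f)) :
    ∀ n, k ≤ n → Function.Bijective (induced k n f) := by
  obtain ⟨N, hN⟩ := hf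
  intro n hn
  obtain rfl | hk := Nat.eq_zero_or_pos k
  · exact absurd (hN N le_rfl).injective (not_injective_induced_zero N f)
  have : NeZero n := ⟨by omega⟩
  have hlarge : N ≤ n * (N + 1) := by nlinarith
  exact Finite.injective_iff_bijective.mp
    (injective_induced_of_dvd (Dvd.intro _ rfl) (hN _ hlarge).injective)
end
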